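/- arXiv:2506.03967 — 2 statements merged into one kernel-verified Lean document; each statement's English description precedes it below -/
import Mathlib

section
/- Let (V, ℓ) be an L∞-algebra with ℓ_k = 0 for k ≥ 3 (a shifted dg Lie algebra), let u_0 = 0 and u_1 ∈ ker ℓ_1. Define recursively u_{k+1} = −h_1(Obs^k), where Obs^k = Σ_{i=2}^{k+1} Σ_{r_1+⋯+r_i = k+1} binom(k+1; r_1,…,r_i)(1/i!) ℓ_i(u_{r_1} ⊙ ⋯ ⊙ u_{r_i}) (only i = 2 contributes), and h_1 : V_1 → V_0 is part of homotopy operators witnessing H¹(V,ℓ_1) = 0 (ℓ_1 h_1 + h_2 ℓ_1 = id on V_1). Then the formal power series u(t) = Σ_{k≥1} (u_k/k!) t^k satisfies the formal Maurer–Cartan equation ℓ_1(u(t)) + ½ℓ_2(u(t), u(t)) = 0 in V_1[[t]]. -/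
/-!
Write `B k = k! [tᵏ] ℓ₂(u(t), u(t))`. For `k ≥ 2` the recursion reads `u k = -h₁ (½ B k)`, so by
the homotopy identity it suffices that `B k` is an `ℓ₁'`-cocycle. The Leibniz rule gives
`ℓ₁' (B k) = -2 ∑ⱼ (k choose j) ℓ₂'(u j, ℓ₁ (u (k - j)))`, and the Maurer–Cartan equations in lower
order turn this into a multiple of `∑_{a+b+c=k} k!/(a! b! c!) ℓ₂'(u a, ℓ₂(u b, u c))`. That sum is
invariant under cyclic rotation of `(a, b, c)`, hence a third of the corresponding sum of
Jacobiators, which vanish.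
-/

open Finset

theorem Nat.choose_mul_choose_rotate (a b c : ℕ) :
    (a + b + c).choose a * (b + c).choose b = (a + b + c).choose b * (c + a).choose c := by
  rw [Nat.choose_symm_of_eq_add (add_assoc a b c), Nat.choose_mul (Nat.le_add_right b c),
    Nat.add_sub_cancel_left, show a + b + c - b = c + a by omega]

section Trinomial

variable {M : Type*} [AddCommMonoid M]

/-- `∑_{a+b+c=n} n!/(a! b! c!) • F a b c`, written as an iterated binomial sum. -/
def trinomialSum (n : ℕ) (F : ℕ → ℕ → ℕ → M) : M :=
  ∑ p ∈ antidiagonal n, ∑ q ∈ antidiagonal p.2, (n.choose p.1 * p.2.choose q.1) • F p.1 q.1 q.2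

theorem trinomialSum_rotate (n : ℕ) (F : ℕ → ℕ → ℕ → M) :
    trinomialSum n (fun a b c => F b c a) = trinomialSum n F := by
  unfold trinomialSum
  rw [sum_sigma', sum_sigma']
  refine sum_nbij' (fun x => ⟨(x.2.1, x.2.2 + x.1.1), (x.2.2, x.1.1)⟩)
    (fun x => ⟨(x.2.2, x.1.1 + x.2.1), (x.1.1, x.2.1)⟩) ?_ ?_ ?_ ?_ ?_
  all_goals
    rintro ⟨⟨a, m⟩, ⟨b, c⟩⟩ hx
    simp only [mem_sigma, HasAntidiagonal.mem_antidiagonal, and_true] at hx ⊢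
    obtain ⟨rfl, rfl⟩ := hx
  · omega
  · omega
  · rfl
  · rfl
  · rw [← add_assoc, Nat.choose_mul_choose_rotate]

theorem trinomialSum_add (n : ℕ) (F G : ℕ → ℕ → ℕ → M) :
    trinomialSum n (fun a b c => F a b c + G a b c) = trinomialSum n F + trinomialSum n G := by
  simp only [trinomialSum, smul_add, sum_add_distrib]

theorem trinomialSum_eq_zero_of_cyclic [IsAddTorsionFree M] {n : ℕ} {F : ℕ → ℕ → ℕ → M}
    (hF : ∀ a b c, F a b c + F b c a + F c a b = 0) : trinomialSum n F = 0 := by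
  have h3 : 3 • trinomialSum n F = 0 := calc
    3 • trinomialSum n F = trinomialSum n F + trinomialSum n (fun a b c => F b c a)
        + trinomialSum n (fun a b c => F c a b) := by
      rw [trinomialSum_rotate n (fun a b c => F c a b), trinomialSum_rotate]; abel
    _ = trinomialSum n (fun a b c => F a b c + F b c a + F c a b) := by
      rw [trinomialSum_add, trinomialSum_add]
    _ = 0 := by simp only [hF, trinomialSum, smul_zero, sum_const_zero]
  exact (nsmul_eq_zero_iff_right three_ne_zero).1 h3

end Trinomial

section MaurerCartan

variable {K V₀ V₁ V₂ : Type*} [Field K] [AddCommGroup V₀] [Module K V₀]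
  [AddCommGroup V₁] [Module K V₁] [AddCommGroup V₂] [Module K V₂]

/-- `k! [tᵏ] ℓ₂(u(t), u(t))` for the exponential generating series `u(t) = ∑ₖ uₖ tᵏ / k!`. -/
def bracketCoeff (ℓ₂ : V₀ →ₗ[K] V₀ →ₗ[K] V₁) (u : ℕ → V₀) (k : ℕ) : V₁ :=
  ∑ p ∈ antidiagonal k, k.choose p.1 • ℓ₂ (u p.1) (u p.2)

def IsMaurerCartanCoeff (ℓ₁ : V₀ →ₗ[K] V₁) (ℓ₂ : V₀ →ₗ[K] V₀ →ₗ[K] V₁) (u : ℕ → V₀)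
    (k : ℕ) : Prop :=
  ℓ₁ (u k) + (2 : K)⁻¹ • bracketCoeff ℓ₂ u k = 0

variable {ℓ₁ : V₀ →ₗ[K] V₁} {ℓ₁' : V₁ →ₗ[K] V₂} {ℓ₂ : V₀ →ₗ[K] V₀ →ₗ[K] V₁}
  {ℓ₂' : V₀ →ₗ[K] V₁ →ₗ[K] V₂} {u : ℕ → V₀}

theorem bracketCoeff_eq_sum_range (k : ℕ) :
    bracketCoeff ℓ₂ u k = ∑ j ∈ range (k + 1), (k.choose j : K) • ℓ₂ (u j) (u (k - j)) := by
  simp only [bracketCoeff, Nat.sum_antidiagonal_eq_sum_range_succ_mk, Nat.cast_smul_eq_nsmul]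

theorem bracketCoeff_succ_eq_sum_Icc (hu0 : u 0 = 0) (k : ℕ) :
    bracketCoeff ℓ₂ u (k + 1) =
      ∑ r ∈ Icc 1 k, ((k + 1).choose r : K) • ℓ₂ (u r) (u (k + 1 - r)) := by
  rw [bracketCoeff_eq_sum_range]
  refine (sum_subset (fun r hr => ?_) fun r hr hr' => ?_).symm
  · simp only [mem_Icc, mem_range] at hr ⊢
    omega
  · simp only [mem_Icc, mem_range, not_and_or, not_le] at hr hr'
    obtain rfl | rfl : r = 0 ∨ r = k + 1 := by omega
    all_goals simp [hu0]

theorem map_bracketCoeff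
    (hJac2 : ∀ a b : V₀, ℓ₁' (ℓ₂ a b) + ℓ₂' a (ℓ₁ b) + ℓ₂' b (ℓ₁ a) = 0) (k : ℕ) :
    ℓ₁' (bracketCoeff ℓ₂ u k) =
      -(2 • ∑ p ∈ antidiagonal k, k.choose p.1 • ℓ₂' (u p.1) (ℓ₁ (u p.2))) := by
  have hJac2' (a b : V₀) : ℓ₁' (ℓ₂ a b) = -(ℓ₂' a (ℓ₁ b) + ℓ₂' b (ℓ₁ a)) :=
    eq_neg_of_add_eq_zero_left (by rw [← add_assoc, hJac2])
  have hswap : ∑ p ∈ antidiagonal k, k.choose p.1 • ℓ₂' (u p.2) (ℓ₁ (u p.1)) =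
      ∑ p ∈ antidiagonal k, k.choose p.1 • ℓ₂' (u p.1) (ℓ₁ (u p.2)) := by
    rw [← Nat.sum_antidiagonal_swap]
    refine sum_congr rfl fun p hp => ?_
    rw [Prod.fst_swap, Prod.snd_swap,
      ← Nat.choose_symm_of_eq_add (HasAntidiagonal.mem_antidiagonal.1 hp).symm]
  simp only [bracketCoeff, map_sum, map_nsmul, hJac2', smul_neg, sum_neg_distrib, smul_add,
    sum_add_distrib, hswap, two_nsmul]

theorem map_bracketCoeff_eq_zero [CharZero K]
    (hJac2 : ∀ a b : V₀, ℓ₁' (ℓ₂ a b) + ℓ₂' a (ℓ₁ b) + ℓ₂' b (ℓ₁ a) = 0)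
    (hJac3 : ∀ a b c : V₀, ℓ₂' c (ℓ₂ a b) + ℓ₂' a (ℓ₂ b c) + ℓ₂' b (ℓ₂ c a) = 0)
    (hu0 : u 0 = 0) {k : ℕ} (hlt : ∀ j < k, IsMaurerCartanCoeff ℓ₁ ℓ₂ u j) :
    ℓ₁' (bracketCoeff ℓ₂ u k) = 0 := by
  have := IsAddTorsionFree.of_isTorsionFree K V₂
  have hterm : ∀ p ∈ antidiagonal k, k.choose p.1 • ℓ₂' (u p.1) (ℓ₁ (u p.2)) =
      -((2 : K)⁻¹ • k.choose p.1 • ℓ₂' (u p.1) (bracketCoeff ℓ₂ u p.2)) := by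
    intro p hp
    rcases Nat.eq_zero_or_pos p.1 with h0 | hpos
    · simp [h0, hu0]
    · rw [HasAntidiagonal.mem_antidiagonal] at hp
      rw [eq_neg_of_add_eq_zero_left (hlt p.2 (by omega)), map_neg, map_smul, smul_neg,
        smul_comm]
  have hcyclic : ∑ p ∈ antidiagonal k, k.choose p.1 • ℓ₂' (u p.1) (bracketCoeff ℓ₂ u p.2) = 0 := by
    have h : trinomialSum k (fun a b c => ℓ₂' (u a) (ℓ₂ (u b) (u c))) = 0 :=
      trinomialSum_eq_zero_of_cyclic fun a b c => hJac3 (u b) (u c) (u a)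
    rw [← h]
    simp only [trinomialSum, bracketCoeff, map_sum, map_nsmul, smul_sum, mul_smul]
  rw [map_bracketCoeff hJac2, sum_congr rfl hterm, sum_neg_distrib, ← smul_sum, hcyclic]
  simp

theorem isMaurerCartanCoeff_of_forall_lt [CharZero K] {h₁ : V₁ →ₗ[K] V₀} {h₂ : V₂ →ₗ[K] V₁}
    (hhom : ∀ w : V₁, ℓ₁ (h₁ w) + h₂ (ℓ₁' w) = w)
    (hJac2 : ∀ a b : V₀, ℓ₁' (ℓ₂ a b) + ℓ₂' a (ℓ₁ b) + ℓ₂' b (ℓ₁ a) = 0)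
    (hJac3 : ∀ a b c : V₀, ℓ₂' c (ℓ₂ a b) + ℓ₂' a (ℓ₂ b c) + ℓ₂' b (ℓ₂ c a) = 0)
    (hu0 : u 0 = 0) {k : ℕ} (hlt : ∀ j < k, IsMaurerCartanCoeff ℓ₁ ℓ₂ u j)
    (huk : u k = -h₁ ((2 : K)⁻¹ • bracketCoeff ℓ₂ u k)) :
    IsMaurerCartanCoeff ℓ₁ ℓ₂ u k := by
  have hcocycle : ℓ₁' ((2 : K)⁻¹ • bracketCoeff ℓ₂ u k) = 0 := by
    rw [map_smul, map_bracketCoeff_eq_zero hJac2 hJac3 hu0 hlt, smul_zero]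
  have hsolve := hhom ((2 : K)⁻¹ • bracketCoeff ℓ₂ u k)
  rw [hcocycle, map_zero, add_zero] at hsolve
  rw [IsMaurerCartanCoeff, huk, map_neg, hsolve, neg_add_cancel]

end MaurerCartan

theorem formal_MC_from_homotopy_operators_general
    {V₀ V₁ V₂ : Type*} [AddCommGroup V₀] [Module ℝ V₀] [AddCommGroup V₁] [Module ℝ V₁]
    [AddCommGroup V₂] [Module ℝ V₂]
    (ℓ₁ : V₀ →ₗ[ℝ] V₁) (ℓ₁' : V₁ →ₗ[ℝ] V₂)
    (ℓ₂ : V₀ →ₗ[ℝ] V₀ →ₗ[ℝ] V₁) (ℓ₂' : V₀ →ₗ[ℝ] V₁ →ₗ[ℝ] V₂)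
    (hJac2 : ∀ a b : V₀, ℓ₁' (ℓ₂ a b) + ℓ₂' a (ℓ₁ b) + ℓ₂' b (ℓ₁ a) = 0)
    (hJac3 : ∀ a b c : V₀, ℓ₂' c (ℓ₂ a b) + ℓ₂' a (ℓ₂ b c) + ℓ₂' b (ℓ₂ c a) = 0)
    -- homotopy operators in degree 1, witnessing H¹(V, ℓ₁) = 0
    (h₁ : V₁ →ₗ[ℝ] V₀) (h₂ : V₂ →ₗ[ℝ] V₁)
    (hhom : ∀ w : V₁, ℓ₁ (h₁ w) + h₂ (ℓ₁' w) = w)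
    -- the recursively defined coefficients
    (u : ℕ → V₀)
    (hu0 : u 0 = 0)
    (hu1 : ℓ₁ (u 1) = 0)
    (hurec : ∀ k : ℕ, 1 ≤ k →
      u (k + 1) = -h₁ ((2 : ℝ)⁻¹ •
        ∑ r ∈ Finset.Icc 1 k, ((k + 1).choose r : ℝ) • ℓ₂ (u r) (u (k + 1 - r)))) :
    ∀ k : ℕ, ℓ₁ (u k) +
      (2 : ℝ)⁻¹ • ∑ j ∈ Finset.range (k + 1), (k.choose j : ℝ) • ℓ₂ (u j) (u (k - j)) = 0 := by
  suffices h : ∀ k, IsMaurerCartanCoeff ℓ₁ ℓ₂ u k by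
    intro k
    simpa only [IsMaurerCartanCoeff, bracketCoeff_eq_sum_range] using h k
  intro k
  induction k using Nat.strong_induction_on with
  | _ k ih =>
    match k with
    | 0 => simp [IsMaurerCartanCoeff, bracketCoeff, hu0]
    | 1 => simp [IsMaurerCartanCoeff, bracketCoeff_succ_eq_sum_Icc hu0 0, hu1]
    | k + 2 =>
      refine isMaurerCartanCoeff_of_forall_lt hhom hJac2 hJac3 hu0 ih ?_
      rw [hurec (k + 1) (by omega), bracketCoeff_succ_eq_sum_Icc hu0]

/-- For a shifted dg Lie algebra (ℓ_k = 0, k ≥ 3) with homotopy operators in degree 1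
witnessing H¹ = 0, the recursively defined coefficients u_{k+1} = −h₁(Obs^k) (with
u_0 = 0, u_1 ∈ ker ℓ₁, and Obs^k = Σ_{r₁+r₂=k+1, r_j≥1} binom(k+1;r₁,r₂)(1/2!)ℓ₂(u_{r₁},u_{r₂}))
yield a formal power series u(t) = Σ_{k≥1} (u_k/k!)t^k satisfying the formal
Maurer–Cartan equation ℓ₁(u(t)) + ½ℓ₂(u(t),u(t)) = 0 in V₁[[t]], i.e. coefficientwise:
∀ k, ℓ₁(u_k) + ½ Σ_{j=0}^{k} binom(k,j) ℓ₂(u_j, u_{k−j}) = 0. -/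
theorem formal_MC_from_homotopy_operators
    {V₀ V₁ V₂ : Type*} [AddCommGroup V₀] [Module ℝ V₀] [AddCommGroup V₁] [Module ℝ V₁]
    [AddCommGroup V₂] [Module ℝ V₂]
    (ℓ₁ : V₀ →ₗ[ℝ] V₁) (ℓ₁' : V₁ →ₗ[ℝ] V₂)
    (ℓ₂ : V₀ →ₗ[ℝ] V₀ →ₗ[ℝ] V₁) (ℓ₂' : V₀ →ₗ[ℝ] V₁ →ₗ[ℝ] V₂)
    (hsym : ∀ a b : V₀, ℓ₂ a b = ℓ₂ b a)
    (hJac1 : ∀ a : V₀, ℓ₁' (ℓ₁ a) = 0)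
    (hJac2 : ∀ a b : V₀, ℓ₁' (ℓ₂ a b) + ℓ₂' a (ℓ₁ b) + ℓ₂' b (ℓ₁ a) = 0)
    (hJac3 : ∀ a b c : V₀, ℓ₂' c (ℓ₂ a b) + ℓ₂' a (ℓ₂ b c) + ℓ₂' b (ℓ₂ c a) = 0)
    -- homotopy operators in degree 1, witnessing H¹(V, ℓ₁) = 0
    (h₁ : V₁ →ₗ[ℝ] V₀) (h₂ : V₂ →ₗ[ℝ] V₁)
    (hhom : ∀ w : V₁, ℓ₁ (h₁ w) + h₂ (ℓ₁' w) = w)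
    -- the recursively defined coefficients
    (u : ℕ → V₀)
    (hu0 : u 0 = 0)
    (hu1 : ℓ₁ (u 1) = 0)
    (hurec : ∀ k : ℕ, 1 ≤ k →
      u (k + 1) = -h₁ ((2 : ℝ)⁻¹ •
        ∑ r ∈ Finset.Icc 1 k, ((k + 1).choose r : ℝ) • ℓ₂ (u r) (u (k + 1 - r)))) :
    ∀ k : ℕ, ℓ₁ (u k) +
      (2 : ℝ)⁻¹ • ∑ j ∈ Finset.range (k + 1), (k.choose j : ℝ) • ℓ₂ (u j) (u (k - j)) = 0 :=
  formal_MC_from_homotopy_operators_general ℓ₁ ℓ₁' ℓ₂ ℓ₂' hJac2 hJac3 h₁ h₂ hhom u hu0 hu1 hurec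
end

section
/- Suppose nonnegative reals a_k satisfy a_1 > 0, a_2 ≤ B a_1², and a_{k+1} ≤ B Σ_{i=2}^{k+1} Σ_{r_1+⋯+r_i=k+1, r_j≥1} a_{r_1}⋯a_{r_i} for all k ≥ 1, where B ≥ 1. Then a_k ≤ a_1^k B^{k−1} C_k for all k ≥ 1, where C_k are the super-Catalan numbers defined by C_1 = C_2 = 1 and C_k = Σ_{i=2}^{k} Σ_{r_1+⋯+r_i=k} C_{r_1}⋯C_{r_i}. -/
open Finset

private lemma comp_blocksFun_lt {n : ℕ} (c : Composition n) (h : 2 ≤ c.length)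
    (i : Fin c.length) : c.blocksFun i < n := by
  obtain ⟨j, _, hj⟩ := Finset.exists_mem_ne
    (s := (Finset.univ : Finset (Fin c.length))) (by simp; omega) i
  calc c.blocksFun i < ∑ k, c.blocksFun k := by
        refine Finset.single_lt_sum hj (Finset.mem_univ _) (Finset.mem_univ _)
          (c.one_le_blocksFun j) (fun k _ _ => Nat.zero_le _)
    _ = n := c.sum_blocksFun

private lemma comp_map_prod {n : ℕ} (c : Composition n) (f : ℕ → ℝ) :
    (c.blocks.map f).prod = ∏ i, f (c.blocksFun i) := by
  rw [← c.ofFn_blocksFun, List.map_ofFn, List.prod_ofFn]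
  rfl

/-- If nonnegative reals a_k satisfy a₁ > 0, a₂ ≤ B a₁² and
a_{k+1} ≤ B Σ_{i=2}^{k+1} Σ_{r₁+⋯+r_i=k+1, r_j≥1} a_{r₁}⋯a_{r_i} for k ≥ 1 with B ≥ 1,
then a_k ≤ a₁^k B^{k−1} C_k, where C are the super-Catalan numbers
(C₁ = C₂ = 1, C_k = Σ_{i=2}^{k} Σ_{r₁+⋯+r_i=k} C_{r₁}⋯C_{r_i}). -/
theorem coefficient_bound_superCatalan
    (a : ℕ → ℝ) (ha : ∀ k, 0 ≤ a k) (ha1 : 0 < a 1)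
    (B : ℝ) (hB : 1 ≤ B)
    (ha2 : a 2 ≤ B * (a 1) ^ 2)
    (harec : ∀ k : ℕ, 1 ≤ k →
      a (k + 1) ≤ B * ∑ c : Composition (k + 1) with 2 ≤ c.length, (c.blocks.map a).prod)
    (C : ℕ → ℝ) (hC1 : C 1 = 1) (hC2 : C 2 = 1)
    (hCrec : ∀ k : ℕ, 3 ≤ k →
      C k = ∑ c : Composition k with 2 ≤ c.length, (c.blocks.map C).prod) :
    ∀ k : ℕ, 1 ≤ k → a k ≤ (a 1) ^ k * B ^ (k - 1) * C k := by
  have hB0 : (0:ℝ) ≤ B := le_trans zero_le_one hB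
  -- nonnegativity of C
  have hCnn : ∀ k : ℕ, 1 ≤ k → 0 ≤ C k := by
    intro k
    induction k using Nat.strong_induction_on with
    | _ k ih =>
      intro hk
      rcases Nat.lt_or_ge k 3 with h3 | h3
      · interval_cases k
        · rw [hC1]; norm_num
        · rw [hC2]; norm_num
      · rw [hCrec k h3]
        refine Finset.sum_nonneg fun c hc => ?_
        simp only [Finset.mem_filter] at hc
        rw [comp_map_prod]
        refine Finset.prod_nonneg fun i _ => ?_
        exact ih _ (comp_blocksFun_lt c hc.2 i) (c.one_le_blocksFun i)
  intro k
  induction k using Nat.strong_induction_on with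
  | _ k ih =>
    intro hk
    rcases Nat.lt_or_ge k 3 with h3 | h3
    · interval_cases k
      · simp [hC1]
      · calc a 2 ≤ B * a 1 ^ 2 := ha2
          _ = a 1 ^ 2 * B ^ (2-1) * C 2 := by rw [hC2]; ring
    · obtain ⟨m, rfl⟩ : ∃ m, k = m + 1 := ⟨k - 1, by omega⟩
      have hm : 1 ≤ m := by omega
      refine (harec m hm).trans ?_
      have key : ∀ c ∈ Finset.univ.filter
          (fun c : Composition (m+1) => 2 ≤ c.length),
          (c.blocks.map a).prod ≤
            a 1 ^ (m+1) * B ^ (m-1) * (c.blocks.map C).prod := by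
        intro c hc
        simp only [Finset.mem_filter] at hc
        rw [comp_map_prod, comp_map_prod]
        have step1 : ∏ i, a (c.blocksFun i) ≤
            ∏ i, (a 1 ^ (c.blocksFun i) * B ^ (c.blocksFun i - 1) * C (c.blocksFun i)) := by
          refine Finset.prod_le_prod (fun i _ => ha _) (fun i _ => ?_)
          exact ih _ ((comp_blocksFun_lt c hc.2 i)) (c.one_le_blocksFun i)
        refine step1.trans ?_
        rw [Finset.prod_mul_distrib, Finset.prod_mul_distrib,
          Finset.prod_pow_eq_pow_sum, Finset.prod_pow_eq_pow_sum, c.sum_blocksFun]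
        have hsum1 : ∑ i, (c.blocksFun i - 1) = m + 1 - c.length := by
          have : ∑ i, (c.blocksFun i - 1) = (∑ i, c.blocksFun i) - ∑ i : Fin c.length, 1 := by
            rw [eq_comm, Nat.sub_eq_iff_eq_add, ← Finset.sum_add_distrib]
            · exact Finset.sum_congr rfl fun i _ => by
                have := c.one_le_blocksFun i; omega
            · exact Finset.sum_le_sum fun i _ => c.one_le_blocksFun i
          rw [this, c.sum_blocksFun]
          simp
        rw [hsum1]
        have hBpow : B ^ (m + 1 - c.length) ≤ B ^ (m - 1) :=
          pow_le_pow_right₀ hB (by omega)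
        have hCp : 0 ≤ ∏ i, C (c.blocksFun i) :=
          Finset.prod_nonneg fun i _ =>
            hCnn _ (c.one_le_blocksFun i)
        have ha1p : (0:ℝ) ≤ a 1 ^ (m+1) := le_of_lt (pow_pos ha1 _)
        calc a 1 ^ (m+1) * B ^ (m+1-c.length) * ∏ i, C (c.blocksFun i)
            ≤ a 1 ^ (m+1) * B ^ (m-1) * ∏ i, C (c.blocksFun i) := by
              apply mul_le_mul_of_nonneg_right _ hCp
              exact mul_le_mul_of_nonneg_left hBpow ha1p
          _ = a 1 ^ (m+1) * B ^ (m-1) * ∏ i, C (c.blocksFun i) := rfl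
      calc B * ∑ c : Composition (m+1) with 2 ≤ c.length, (c.blocks.map a).prod
          ≤ B * ∑ c : Composition (m+1) with 2 ≤ c.length,
              (a 1 ^ (m+1) * B ^ (m-1) * (c.blocks.map C).prod) :=
            mul_le_mul_of_nonneg_left (Finset.sum_le_sum key) hB0
        _ = a 1 ^ (m+1) * B ^ (m-1) * B *
              ∑ c : Composition (m+1) with 2 ≤ c.length, (c.blocks.map C).prod := by
            rw [← Finset.mul_sum]; ring
        _ = a 1 ^ (m+1) * B ^ (m+1-1) * C (m+1) := by
            rw [← hCrec (m+1) (by omega)]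
            have : B ^ (m-1) * B = B ^ (m+1-1) := by
              rw [← pow_succ]; congr 1; omega
            rw [mul_assoc (a 1 ^ (m+1)), this]
end
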